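/- arXiv:2407.08870 — 2 statements merged into one kernel-verified Lean document; each statement's English description precedes it below -/
import Mathlib

section
/- If G is a finite simple graph on n vertices, then α'₁(G) ≤ ⌊(n+1)/2⌋. -/
open scoped Classical

/-- Two edges (as unordered pairs) share a vertex. -/
def ShareVertex {V : Type*} (e f : Sym2 V) : Prop := ∃ v, v ∈ e ∧ v ∈ f

/-- `M` is a 1-nearly edge independent set of `G`: a set of edges of `G` containing
exactly one pair of distinct edges sharing a common vertex. -/
def IsOneNearlyEdgeIndep {V : Type*} (G : SimpleGraph V) (M : Finset (Sym2 V)) : Prop :=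
  ↑M ⊆ G.edgeSet ∧
    (M.offDiag.filter fun p => ShareVertex p.1 p.2).card = 2

/-- The 1-nearly edge independence number `α'₁(G)`: maximum cardinality of a
1-nearly edge independent set, `0` if none exists. -/
noncomputable def edgeAlpha1 {V : Type*} (G : SimpleGraph V) : ℕ :=
  sSup {k | ∃ M : Finset (Sym2 V), IsOneNearlyEdgeIndep G M ∧ M.card = k}

/-- `I` is a 1-nearly vertex independent set of `G`: exactly one pair of distinct
vertices of `I` is adjacent in `G`. -/
def IsOneNearlyVertexIndep {V : Type*} (G : SimpleGraph V) (I : Finset V) : Prop :=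
  (I.offDiag.filter fun p => G.Adj p.1 p.2).card = 2

/-- The 1-nearly vertex independence number `α₁(G)`. -/
noncomputable def vertexAlpha1 {V : Type*} (G : SimpleGraph V) : ℕ :=
  sSup {k | ∃ I : Finset V, IsOneNearlyVertexIndep G I ∧ I.card = k}

/-!
Let `e, f` be the unique pair of distinct edges of `M` that meet, say in `v`. Removing `e`
leaves a matching, which covers `2 (|M| - 1)` vertices; the endpoint of `e` other than `v`
is not among them, since an edge through it meets `e` and so is `f`, and two distinct
edges cannot share two vertices. Hence `2 (|M| - 1) + 1 ≤ n`.
-/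

section

variable {V : Type*}

theorem ShareVertex.symm {e f : Sym2 V} (h : ShareVertex e f) : ShareVertex f e :=
  let ⟨v, hve, hvf⟩ := h
  ⟨v, hvf, hve⟩

theorem not_shareVertex_iff_disjoint {e f : Sym2 V} :
    ¬ ShareVertex e f ↔ Disjoint e.toFinset f.toFinset := by
  simp [ShareVertex, Finset.disjoint_left, Sym2.mem_toFinset]

theorem card_biUnion_toFinset_of_pairwise_not_shareVertex {S : Finset (Sym2 V)}
    (hloop : ∀ e ∈ S, ¬ e.IsDiag) (hS : (S : Set (Sym2 V)).Pairwise fun e f => ¬ ShareVertex e f) :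
    (S.biUnion Sym2.toFinset).card = 2 * S.card := by
  have hdisj : (S : Set (Sym2 V)).PairwiseDisjoint Sym2.toFinset :=
    hS.mono' fun _ _ => not_shareVertex_iff_disjoint.1
  rw [Finset.card_biUnion hdisj,
    Finset.sum_congr rfl fun e he => Sym2.card_toFinset_of_not_isDiag e (hloop e he),
    Finset.sum_const, smul_eq_mul, mul_comm]

namespace IsOneNearlyEdgeIndep

variable {G : SimpleGraph V} {M : Finset (Sym2 V)}

theorem exists_unique_shareVertex_pair (h : IsOneNearlyEdgeIndep G M) :
    ∃ e ∈ M, ∃ f ∈ M, e ≠ f ∧ ShareVertex e f ∧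
      ∀ a ∈ M, ∀ b ∈ M, a ≠ b → ShareVertex a b → (a = e ∧ b = f) ∨ (a = f ∧ b = e) := by
  obtain ⟨x, y, -, hF⟩ := Finset.card_eq_two.1 h.2
  have mem_F : ∀ {a b}, (a, b) ∈ M.offDiag.filter (fun p => ShareVertex p.1 p.2) ↔
      a ∈ M ∧ b ∈ M ∧ a ≠ b ∧ ShareVertex a b := fun {_ _} => by
    simp only [Finset.mem_filter, Finset.mem_offDiag, and_assoc]
  obtain ⟨e, f⟩ := x
  obtain ⟨he, hf, hef, hshare⟩ := mem_F.1 (hF ▸ Finset.mem_insert_self _ _)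
  have hy : y = (f, e) := by
    have hfe := mem_F.2 ⟨hf, he, hef.symm, hshare.symm⟩
    rw [hF, Finset.mem_insert, Finset.mem_singleton] at hfe
    exact (hfe.resolve_left fun h => hef (Prod.ext_iff.1 h).2).symm
  refine ⟨e, he, f, hf, hef, hshare, fun a ha b hb hab hab' => ?_⟩
  have hmem := mem_F.2 ⟨ha, hb, hab, hab'⟩
  simpa [hF, hy] using hmem

theorem two_mul_card_le [Fintype V] (h : IsOneNearlyEdgeIndep G M) :
    2 * M.card ≤ Fintype.card V + 1 := by
  obtain ⟨e, he, f, hf, hef, ⟨v, hve, hvf⟩, huniq⟩ := h.exists_unique_shareVertex_pair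
  have hloop : ∀ g ∈ M, ¬ g.IsDiag := fun g hg => G.not_isDiag_of_mem_edgeSet (h.1 hg)
  have hmatching : (↑(M.erase e) : Set (Sym2 V)).Pairwise fun a b => ¬ ShareVertex a b := by
    intro a ha b hb hab hshare
    simp only [Finset.coe_erase, Set.mem_sdiff, Finset.mem_coe, Set.mem_singleton_iff] at ha hb
    rcases huniq a ha.1 b hb.1 hab hshare with ⟨rfl, -⟩ | ⟨-, rfl⟩
    exacts [ha.2 rfl, hb.2 rfl]
  have hu : Sym2.Mem.other hve ∉ (M.erase e).biUnion Sym2.toFinset := by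
    simp only [Finset.mem_biUnion, Finset.mem_erase, Sym2.mem_toFinset, not_exists, not_and]
    rintro g ⟨hge, hg⟩ hug
    rcases huniq e he g hg (Ne.symm hge) ⟨_, Sym2.other_mem hve, hug⟩ with ⟨-, rfl⟩ | ⟨rfl, -⟩
    · exact hef (Sym2.eq_of_ne_mem (Sym2.other_ne (hloop e he) hve) (Sym2.other_mem hve) hve
        hug hvf)
    · exact hef rfl
  have hcard := (insert (Sym2.Mem.other hve) ((M.erase e).biUnion Sym2.toFinset)).card_le_univ
  rw [Finset.card_insert_of_notMem hu, card_biUnion_toFinset_of_pairwise_not_shareVertex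
    (fun g hg => hloop g (Finset.mem_of_mem_erase hg)) hmatching,
    Finset.card_erase_of_mem he] at hcard
  have hpos : 0 < M.card := Finset.card_pos.2 ⟨e, he⟩
  omega

end IsOneNearlyEdgeIndep

end

theorem edgeAlpha1_le {V : Type*} [Fintype V] (G : SimpleGraph V) :
    edgeAlpha1 G ≤ (Fintype.card V + 1) / 2 := by
  refine csSup_le' ?_
  rintro _ ⟨M, hM, rfl⟩
  rw [Nat.le_div_iff_mul_le two_pos, mul_comm]
  exact hM.two_mul_card_le
end

section
/- If T is a tree on n ≥ 3 vertices with α'₁(T) = 2, then T is isomorphic to the star K_{1,n-1} or to the path P₄. -/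
open scoped Classical

/-- The star `K_{1,n-1}` on `Fin n` with center `0`. -/
def starGraph (n : ℕ) : SimpleGraph (Fin n) where
  Adj a b := a ≠ b ∧ (a.val = 0 ∨ b.val = 0)
  symm := ⟨fun a b ⟨h1, h2⟩ => ⟨h1.symm, h2.symm⟩⟩
  loopless := ⟨fun a h => h.1 rfl⟩

/-! If `α'₁(T) = 2`, then `T` has no three edges of which exactly two meet, so every edge of `T`
meets every path `a - b - c`. If some vertex is adjacent to all others, the tree is a star.
Otherwise there is a path `a - b - c - d` with `d` not adjacent to `b`; a vertex `x` outside it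
would have a neighbour `y`, which must lie on both `a - b - c` and `b - c - d`, i.e. `y ∈ {b, c}`;
but then `x - b - a` misses the edge `c d`, or `x - c - d` misses `a b`. So `T` has exactly these
four vertices, and a tree containing a spanning path is that path. -/

section ShareVertex

variable {V : Type*}

theorem shareVertex_comm {e f : Sym2 V} : ShareVertex e f ↔ ShareVertex f e :=
  exists_congr fun _ => and_comm

theorem shareVertex_self (e : Sym2 V) : ShareVertex e e :=
  Sym2.inductionOn e fun x _ => ⟨x, Sym2.mem_mk_left _ _, Sym2.mem_mk_left _ _⟩

@[simp]
theorem shareVertex_mk_mk {a b x y : V} :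
    ShareVertex s(a, b) s(x, y) ↔ a = x ∨ a = y ∨ b = x ∨ b = y := by
  simp only [ShareVertex, Sym2.mem_iff]
  aesop

end ShareVertex

namespace IsOneNearlyEdgeIndep

variable {V : Type*} {G : SimpleGraph V} {M : Finset (Sym2 V)}

theorem pair {e f : Sym2 V} (he : e ∈ G.edgeSet) (hf : f ∈ G.edgeSet) (hef : e ≠ f)
    (hs : ShareVertex e f) : IsOneNearlyEdgeIndep G {e, f} := by
  refine ⟨by simp [Set.insert_subset_iff, he, hf], ?_⟩
  have hshare : ∀ p ∈ ({e, f} : Finset (Sym2 V)).offDiag, ShareVertex p.1 p.2 := by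
    rintro ⟨p, q⟩ hpq
    simp only [Finset.mem_offDiag, Finset.mem_insert, Finset.mem_singleton] at hpq
    obtain ⟨rfl | rfl, rfl | rfl, hne⟩ := hpq
    exacts [absurd rfl hne, hs, shareVertex_comm.mp hs, absurd rfl hne]
  rw [Finset.filter_true_of_mem hshare, Finset.offDiag_card, Finset.card_pair hef]

theorem insert (hM : IsOneNearlyEdgeIndep G M) {g : Sym2 V} (hg : g ∈ G.edgeSet)
    (hdisj : ∀ e ∈ M, ¬ ShareVertex e g) : IsOneNearlyEdgeIndep G (insert g M) := by
  have hgM : g ∉ M := fun h => hdisj g h (shareVertex_self g)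
  refine ⟨by simpa [Set.insert_subset_iff, hg] using hM.1, ?_⟩
  have hleft : ({g} ×ˢ M).filter (fun p => ShareVertex p.1 p.2) = ∅ := by
    simp only [Finset.filter_eq_empty_iff, Finset.mem_product, Finset.mem_singleton, and_imp,
      Prod.forall]
    rintro _ e rfl he
    exact fun h => hdisj e he (shareVertex_comm.mp h)
  have hright : (M ×ˢ {g}).filter (fun p => ShareVertex p.1 p.2) = ∅ := by
    simp only [Finset.filter_eq_empty_iff, Finset.mem_product, Finset.mem_singleton, and_imp,
      Prod.forall]
    rintro e _ he rfl
    exact hdisj e he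
  rw [Finset.offDiag_insert hgM, Finset.filter_union, Finset.filter_union, hleft, hright,
    Finset.union_empty, Finset.union_empty, hM.2]

theorem exists_adj_adj (hM : IsOneNearlyEdgeIndep G M) :
    ∃ b a c, a ≠ c ∧ G.Adj b a ∧ G.Adj b c := by
  obtain ⟨⟨e, f⟩, hp⟩ := Finset.card_pos.mp (hM.2.symm ▸ two_pos)
  simp only [Finset.mem_filter, Finset.mem_offDiag] at hp
  obtain ⟨⟨he, hf, hef⟩, v, hve, hvf⟩ := hp
  obtain ⟨a, rfl⟩ := Sym2.mem_iff_exists.mp hve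
  obtain ⟨c, rfl⟩ := Sym2.mem_iff_exists.mp hvf
  exact ⟨v, a, c, fun h => hef (h ▸ rfl), hM.1 he, hM.1 hf⟩

end IsOneNearlyEdgeIndep

section edgeAlpha1

variable {V : Type*} {G : SimpleGraph V}

theorem card_le_edgeAlpha1 [Finite V] {M : Finset (Sym2 V)} (hM : IsOneNearlyEdgeIndep G M) :
    M.card ≤ edgeAlpha1 G := by
  have := Fintype.ofFinite V
  refine le_csSup ⟨Fintype.card (Sym2 V), ?_⟩ ⟨M, hM, rfl⟩
  rintro k ⟨N, -, rfl⟩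
  exact N.card_le_univ

theorem exists_isOneNearlyEdgeIndep_of_edgeAlpha1_ne_zero (h : edgeAlpha1 G ≠ 0) :
    ∃ M, IsOneNearlyEdgeIndep G M := by
  contrapose! h with hnone
  have hempty : {k | ∃ M, IsOneNearlyEdgeIndep G M ∧ M.card = k} = ∅ :=
    Set.eq_empty_of_forall_notMem fun _ ⟨M, hM, _⟩ => hnone M hM
  rw [edgeAlpha1, hempty, csSup_empty, bot_eq_zero]

/-- A cherry is a path `a - b - c` on three vertices. -/
def EdgesMeetCherries (G : SimpleGraph V) : Prop :=
  ∀ ⦃a b c x y : V⦄, G.Adj a b → G.Adj b c → a ≠ c → G.Adj x y →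
    x = a ∨ x = b ∨ x = c ∨ y = a ∨ y = b ∨ y = c

theorem edgesMeetCherries_of_edgeAlpha1_le_two [Finite V] (h : edgeAlpha1 G ≤ 2) :
    EdgesMeetCherries G := by
  intro a b c x y hab hbc hac hxy
  by_contra! hfar
  have hpair : IsOneNearlyEdgeIndep G {s(a, b), s(b, c)} :=
    .pair hab hbc (by simp [hac, hab.ne]) (by simp)
  have hdisj : ∀ e ∈ ({s(a, b), s(b, c)} : Finset (Sym2 V)), ¬ ShareVertex e s(x, y) := by
    simp only [Finset.mem_insert, Finset.mem_singleton, forall_eq_or_imp, forall_eq,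
      shareVertex_mk_mk]
    grind
  have hcard : (insert s(x, y) {s(a, b), s(b, c)} : Finset (Sym2 V)).card = 3 := by
    rw [Finset.card_insert_of_notMem, Finset.card_pair (by simp [hac, hab.ne])]
    exact fun hmem => hdisj _ hmem (shareVertex_self _)
  have := card_le_edgeAlpha1 (hpair.insert hxy hdisj)
  omega

end edgeAlpha1

theorem starGraph_eq_starGraph_zero (n : ℕ) [NeZero n] :
    starGraph n = SimpleGraph.starGraph 0 := by
  ext i j
  rw [SimpleGraph.starGraph_adj, ← Fin.val_eq_zero_iff, ← Fin.val_eq_zero_iff]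
  rfl

namespace SimpleGraph

variable {V W : Type*} {G : SimpleGraph V}

/-- Trees are minimally connected. -/
theorem IsTree.nonempty_iso_of_forall_adj {H : SimpleGraph W} (hG : G.IsTree)
    (hH : H.Connected) (φ : W ≃ V) (hφ : ∀ u v, H.Adj u v → G.Adj (φ u) (φ v)) :
    Nonempty (G ≃g H) := by
  have hmin : Minimal Connected (G.comap φ) :=
    isTree_iff_minimal_connected.mp ((Iso.comap φ G).isTree_iff.mpr hG)
  have heq : G.comap φ = H := le_antisymm (hmin.le_of_le hH hφ) hφ
  exact ⟨heq ▸ (Iso.comap φ G).symm⟩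

theorem IsTree.nonempty_iso_starGraph_of_isUniversal [Fintype V] {n : ℕ} (hG : G.IsTree)
    (hcard : Fintype.card V = n) {c : V} (hc : G.IsUniversal c) :
    Nonempty (G ≃g _root_.starGraph n) := by
  have : NeZero n := .of_pos (hcard ▸ Fintype.card_pos_iff.mpr ⟨c⟩)
  let e := Fintype.equivFinOfCardEq hcard
  let φ : Fin n ≃ V := (e.trans (Equiv.swap (e c) 0)).symm
  have hφ : φ 0 = c := by simp [φ]
  refine hG.nonempty_iso_of_forall_adj
    (starGraph_eq_starGraph_zero n ▸ connected_starGraph 0) φ ?_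
  rintro i j ⟨hij, hi | hj⟩
  · obtain rfl : i = 0 := Fin.ext hi
    exact hφ ▸ hc (hφ ▸ φ.injective.ne hij)
  · obtain rfl : j = 0 := Fin.ext hj
    exact (hφ ▸ hc (hφ ▸ φ.injective.ne hij.symm)).symm

theorem Walk.exists_adj_adj_not_adj {x b : V} (p : G.Walk x b) (hxb : x ≠ b)
    (hbx : ¬ G.Adj b x) : ∃ z w, G.Adj b z ∧ G.Adj z w ∧ w ≠ b ∧ ¬ G.Adj b w := by
  induction p with
  | nil => exact absurd rfl hxb
  | @cons x y b hxy q ih =>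
    by_cases hyb : y = b
    · exact absurd (hyb ▸ hxy.symm) hbx
    by_cases hby : G.Adj b y
    · exact ⟨y, x, hby, hxy.symm, hxb, hbx⟩
    · exact ih hyb hby

theorem IsTree.nonempty_iso_pathGraph_four (hG : G.IsTree) (hmeet : EdgesMeetCherries G)
    {a b c d : V} (hab : G.Adj a b) (hbc : G.Adj b c) (hcd : G.Adj c d)
    (hac : a ≠ c) (had : a ≠ d) (hbd : b ≠ d) : Nonempty (G ≃g pathGraph 4) := by
  have hab' := hab.ne
  have hbc' := hbc.ne
  have hcd' := hcd.ne
  have hcover : ∀ x, x = a ∨ x = b ∨ x = c ∨ x = d := by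
    intro x
    by_contra! hx
    have : Nontrivial V := nontrivial_of_ne a b hab'
    obtain ⟨y, hxy⟩ := hG.connected.preconnected.exists_adj_of_nontrivial x
    have hyabc := hmeet hab hbc hac hxy
    have hybcd := hmeet hbc hcd hbd hxy
    obtain rfl | rfl : y = b ∨ y = c := by grind
    · have := hmeet hxy hab.symm hx.1 hcd
      grind
    · have := hmeet hxy hcd hx.2.2.2 hab
      grind
  let f : Fin 4 → V := ![a, b, c, d]
  have hf : Function.Bijective f := by
    refine ⟨fun i j hij => ?_, fun x => ?_⟩
    · fin_cases i <;> fin_cases j <;> simp [f] at hij ⊢ <;> grind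
    · rcases hcover x with rfl | rfl | rfl | rfl
      exacts [⟨0, rfl⟩, ⟨1, rfl⟩, ⟨2, rfl⟩, ⟨3, rfl⟩]
  refine hG.nonempty_iso_of_forall_adj (pathGraph_connected 3) (.ofBijective f hf) ?_
  intro i j hij
  fin_cases i <;> fin_cases j <;>
    simp_all [pathGraph_adj, f, hab.symm, hbc.symm, hcd.symm]

end SimpleGraph

theorem tree_with_edgeAlpha1_two_general {V : Type*} [Fintype V] (G : SimpleGraph V)
    (htree : G.IsTree) {n : ℕ} (hc : Fintype.card V = n)
    (h2 : edgeAlpha1 G = 2) :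
    Nonempty (G ≃g starGraph n) ∨ Nonempty (G ≃g SimpleGraph.pathGraph 4) := by
  have hmeet := edgesMeetCherries_of_edgeAlpha1_le_two h2.le
  obtain ⟨M, hM⟩ := exists_isOneNearlyEdgeIndep_of_edgeAlpha1_ne_zero (h2 ▸ two_ne_zero)
  obtain ⟨b, a₁, a₂, ha, hba₁, hba₂⟩ := hM.exists_adj_adj
  by_cases hstar : ∃ c, G.IsUniversal c
  · obtain ⟨c, hcu⟩ := hstar
    exact .inl (htree.nonempty_iso_starGraph_of_isUniversal hc hcu)
  obtain ⟨x, hbx, hnadj⟩ : ∃ x, b ≠ x ∧ ¬ G.Adj b x := by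
    simpa [SimpleGraph.IsUniversal] using not_exists.mp hstar b
  obtain ⟨p⟩ := htree.connected.preconnected x b
  obtain ⟨c, d, hbc, hcd, hdb, hbd⟩ := p.exists_adj_adj_not_adj (Ne.symm hbx) hnadj
  obtain ⟨a, hba, hac⟩ : ∃ a, G.Adj b a ∧ a ≠ c := by
    by_cases h : a₁ = c
    exacts [⟨a₂, hba₂, h ▸ ha.symm⟩, ⟨a₁, hba₁, h⟩]
  exact .inr (htree.nonempty_iso_pathGraph_four hmeet hba.symm hbc hcd hac
    (fun h => hbd (h ▸ hba)) hdb.symm)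

theorem tree_with_edgeAlpha1_two {V : Type*} [Fintype V] (G : SimpleGraph V)
    (htree : G.IsTree) {n : ℕ} (hc : Fintype.card V = n) (hn : 3 ≤ n)
    (h2 : edgeAlpha1 G = 2) :
    Nonempty (G ≃g starGraph n) ∨ Nonempty (G ≃g SimpleGraph.pathGraph 4) :=
  tree_with_edgeAlpha1_two_general G htree hc h2
end
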